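/- arXiv:2210.02265 — 5 statements merged into one kernel-verified Lean document; each statement's English description precedes it below -/
import Mathlib

section
/- Let Π₁, Π₂ be Hermitian projectors on ℂⁿ and α₁, α₂ ∈ ℂ \ ℝ with α₁ ≠ α₂ and α₁ ≠ α₂*. Suppose the matrix φ = (α₁* - α₂) I + (α₁ - α₁*) Π₁ + (α₂ - α₂*) Π₂ is invertible, and set P_j = φ⁻¹ Π_j φ for j = 1,2. Then the refactorization identity (I - ((α₂-α₂*)/(λ-α₂*)) Π₂)(I - ((α₁-α₁*)/(λ-α₁*)) Π₁) = (I - ((α₁-α₁*)/(λ-α₁*)) P₁)(I - ((α₂-α₂*)/(λ-α₂*)) P₂) holds for all λ outside the pole set {α₁*, α₂*}. -/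
open Matrix Complex

theorem stmt_6 (n : ℕ) (P1 P2 : Matrix (Fin n) (Fin n) ℂ)
    (hP1 : P1 * P1 = P1) (hP1h : P1ᴴ = P1)
    (hP2 : P2 * P2 = P2) (hP2h : P2ᴴ = P2)
    (α₁ α₂ : ℂ) (hα₁ : α₁.im ≠ 0) (hα₂ : α₂.im ≠ 0)
    (hne : α₁ ≠ α₂) (hne' : α₁ ≠ star α₂)
    (φ : Matrix (Fin n) (Fin n) ℂ)
    (hφ : φ = (star α₁ - α₂) • (1 : Matrix (Fin n) (Fin n) ℂ)
              + (α₁ - star α₁) • P1 + (α₂ - star α₂) • P2)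
    (hinv : IsUnit φ)
    (Q1 Q2 : Matrix (Fin n) (Fin n) ℂ)
    (hQ1 : Q1 = φ⁻¹ * P1 * φ) (hQ2 : Q2 = φ⁻¹ * P2 * φ)
    (l : ℂ) (hl1 : l ≠ star α₁) (hl2 : l ≠ star α₂) :
    ((1 : Matrix (Fin n) (Fin n) ℂ) - ((α₂ - star α₂) / (l - star α₂)) • P2)
      * ((1 : Matrix (Fin n) (Fin n) ℂ) - ((α₁ - star α₁) / (l - star α₁)) • P1)
    = ((1 : Matrix (Fin n) (Fin n) ℂ) - ((α₁ - star α₁) / (l - star α₁)) • Q1)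
      * ((1 : Matrix (Fin n) (Fin n) ℂ) - ((α₂ - star α₂) / (l - star α₂)) • Q2) := by
  have hdet : IsUnit φ.det := (Matrix.isUnit_iff_isUnit_det φ).mp hinv
  have hiφ : φ⁻¹ * φ = 1 := Matrix.nonsing_inv_mul φ hdet
  have hφi : φ * φ⁻¹ = 1 := Matrix.mul_nonsing_inv φ hdet
  have hd1 : l - star α₁ ≠ 0 := sub_ne_zero.mpr hl1
  have hd2 : l - star α₂ ≠ 0 := sub_ne_zero.mpr hl2
  set d1 := l - star α₁ with hd1def
  set d2 := l - star α₂ with hd2def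
  set b1 := α₁ - star α₁ with hb1def
  set b2 := α₂ - star α₂ with hb2def
  have h11 : ∀ M : Matrix (Fin n) (Fin n) ℂ, P1 * (P1 * M) = P1 * M := fun M => by
    rw [← mul_assoc, hP1]
  have h22 : ∀ M : Matrix (Fin n) (Fin n) ℂ, P2 * (P2 * M) = P2 * M := fun M => by
    rw [← mul_assoc, hP2]
  -- key identity with denominators cleared
  have key : φ * ((d2 • (1 : Matrix (Fin n) (Fin n) ℂ) - b2 • P2)
      * (d1 • (1 : Matrix (Fin n) (Fin n) ℂ) - b1 • P1))
      = (d1 • (1 : Matrix (Fin n) (Fin n) ℂ) - b1 • P1)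
        * ((d2 • (1 : Matrix (Fin n) (Fin n) ℂ) - b2 • P2) * φ) := by
    subst hφ
    simp only [hb1def, hb2def, hd1def, hd2def]
    simp only [Matrix.smul_mul, Matrix.mul_smul, mul_sub, sub_mul, add_mul, mul_add,
      mul_one, one_mul, smul_smul, smul_sub, smul_add, mul_assoc, hP1, hP2, h11, h22]
    module
  -- express the λ-dependent factors via cleared-denominator versions
  have e1 : (1 : Matrix (Fin n) (Fin n) ℂ) - (b1 / d1) • P1
      = d1⁻¹ • (d1 • (1 : Matrix (Fin n) (Fin n) ℂ) - b1 • P1) := by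
    rw [smul_sub, smul_smul, smul_smul, inv_mul_cancel₀ hd1, one_smul,
      div_eq_inv_mul]
  have e2 : (1 : Matrix (Fin n) (Fin n) ℂ) - (b2 / d2) • P2
      = d2⁻¹ • (d2 • (1 : Matrix (Fin n) (Fin n) ℂ) - b2 • P2) := by
    rw [smul_sub, smul_smul, smul_smul, inv_mul_cancel₀ hd2, one_smul,
      div_eq_inv_mul]
  -- conjugation of the factors by φ
  have conj : ∀ (s : ℂ) (P : Matrix (Fin n) (Fin n) ℂ),
      (1 : Matrix (Fin n) (Fin n) ℂ) - s • (φ⁻¹ * P * φ)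
        = φ⁻¹ * (((1 : Matrix (Fin n) (Fin n) ℂ) - s • P) * φ) := by
    intro s P
    rw [sub_mul, Matrix.mul_sub, one_mul, hiφ, Matrix.smul_mul, Matrix.mul_smul,
      mul_assoc]
  rw [hQ1, hQ2, conj, conj]
  rw [show φ⁻¹ * (((1:Matrix (Fin n) (Fin n) ℂ) - (b1/d1) • P1) * φ)
        * (φ⁻¹ * (((1:Matrix (Fin n) (Fin n) ℂ) - (b2/d2) • P2) * φ))
      = φ⁻¹ * ((((1:Matrix (Fin n) (Fin n) ℂ) - (b1/d1) • P1) * (φ * φ⁻¹))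
        * ((((1:Matrix (Fin n) (Fin n) ℂ) - (b2/d2) • P2)) * φ)) by
      simp only [mul_assoc]]
  rw [hφi, mul_one]
  -- reduce to the key identity
  have main : φ * (((1:Matrix (Fin n) (Fin n) ℂ) - (b2/d2) • P2)
      * ((1:Matrix (Fin n) (Fin n) ℂ) - (b1/d1) • P1))
      = ((1:Matrix (Fin n) (Fin n) ℂ) - (b1/d1) • P1)
        * (((1:Matrix (Fin n) (Fin n) ℂ) - (b2/d2) • P2) * φ) := by
    rw [e1, e2]
    simp only [Matrix.smul_mul, Matrix.mul_smul, smul_smul]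
    rw [mul_comm d2⁻¹ d1⁻¹, key]
  calc ((1:Matrix (Fin n) (Fin n) ℂ) - (b2/d2) • P2)
        * ((1:Matrix (Fin n) (Fin n) ℂ) - (b1/d1) • P1)
      = φ⁻¹ * (φ * (((1:Matrix (Fin n) (Fin n) ℂ) - (b2/d2) • P2)
          * ((1:Matrix (Fin n) (Fin n) ℂ) - (b1/d1) • P1))) := by
        rw [← mul_assoc, hiφ, one_mul]
    _ = φ⁻¹ * (((1:Matrix (Fin n) (Fin n) ℂ) - (b1/d1) • P1)
          * (((1:Matrix (Fin n) (Fin n) ℂ) - (b2/d2) • P2) * φ)) := by rw [main]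
end

section
/- With the hypotheses of the refactorization theorem (Π₁, Π₂ Hermitian projectors, α₁, α₂ ∈ ℂ \ ℝ, α₁ ≠ α₂, α₁ ≠ α₂*, φ = (α₁* - α₂)I + (α₁ - α₁*)Π₁ + (α₂ - α₂*)Π₂ invertible), the conjugated matrices P_j = φ⁻¹ Π_j φ (j = 1,2) are again Hermitian projectors. -/
open Matrix Complex

private lemma comm_aux (n : ℕ) (P1 P2 : Matrix (Fin n) (Fin n) ℂ)
    (hP1 : P1 * P1 = P1) (hP2 : P2 * P2 = P2) (a b d : ℂ) :
    ((a•1 + b•P1 + d•P2) * ((a+b+d)•(1:Matrix (Fin n) (Fin n) ℂ) - b•P1 - d•P2)) * P1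
      = P1 * ((a•1 + b•P1 + d•P2) * ((a+b+d)•1 - b•P1 - d•P2)) := by
  simp only [add_mul, mul_add, sub_mul, mul_sub, smul_mul_assoc, mul_smul_comm,
    Matrix.mul_one, Matrix.one_mul, smul_smul]
  simp only [Matrix.mul_assoc]
  simp only [hP1, hP2, ← Matrix.mul_assoc, hP1, hP2]
  simp only [Matrix.mul_assoc]
  module

theorem stmt_7 (n : ℕ) (P1 P2 : Matrix (Fin n) (Fin n) ℂ)
    (hP1 : P1 * P1 = P1) (hP1h : P1ᴴ = P1)
    (hP2 : P2 * P2 = P2) (hP2h : P2ᴴ = P2)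
    (α₁ α₂ : ℂ) (hα₁ : α₁.im ≠ 0) (hα₂ : α₂.im ≠ 0)
    (hne : α₁ ≠ α₂) (hne' : α₁ ≠ star α₂)
    (φ : Matrix (Fin n) (Fin n) ℂ)
    (hφ : φ = (star α₁ - α₂) • (1 : Matrix (Fin n) (Fin n) ℂ)
              + (α₁ - star α₁) • P1 + (α₂ - star α₂) • P2)
    (hinv : IsUnit φ)
    (Q1 Q2 : Matrix (Fin n) (Fin n) ℂ)
    (hQ1 : Q1 = φ⁻¹ * P1 * φ) (hQ2 : Q2 = φ⁻¹ * P2 * φ) :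
    (Q1 * Q1 = Q1 ∧ Q1ᴴ = Q1) ∧ (Q2 * Q2 = Q2 ∧ Q2ᴴ = Q2) := by
  set a : ℂ := star α₁ - α₂ with ha
  set b : ℂ := α₁ - star α₁ with hb
  set d : ℂ := α₂ - star α₂ with hd
  have hdet : IsUnit φ.det := (Matrix.isUnit_iff_isUnit_det φ).mp hinv
  have hdetH : IsUnit φᴴ.det := by
    rw [Matrix.det_conjTranspose]; exact hdet.star
  have h1 : φ * φ⁻¹ = 1 := Matrix.mul_nonsing_inv φ hdet
  have h2 : φ⁻¹ * φ = 1 := Matrix.nonsing_inv_mul φ hdet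
  have h3 : φᴴ * (φᴴ)⁻¹ = 1 := Matrix.mul_nonsing_inv _ hdetH
  have hφH : φᴴ = (a+b+d) • (1 : Matrix (Fin n) (Fin n) ℂ) - b • P1 - d • P2 := by
    rw [hφ]
    simp only [Matrix.conjTranspose_add, Matrix.conjTranspose_smul, hP1h, hP2h,
      Matrix.conjTranspose_one, star_sub, star_star, ha, hb, hd]
    module
  -- key commutation relations
  have key1 : φ * φᴴ * P1 = P1 * (φ * φᴴ) := by
    rw [hφH, hφ]; exact comm_aux n P1 P2 hP1 hP2 a b d
  have key2 : φ * φᴴ * P2 = P2 * (φ * φᴴ) := by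
    have e1 : a•(1:Matrix (Fin n) (Fin n) ℂ) + b•P1 + d•P2 = a•1 + d•P2 + b•P1 := by
      module
    have e2 : (a+b+d)•(1:Matrix (Fin n) (Fin n) ℂ) - b•P1 - d•P2
        = (a+d+b)•1 - d•P2 - b•P1 := by module
    rw [hφH, hφ, e1, e2]
    exact comm_aux n P2 P1 hP2 hP1 a d b
  have herm : ∀ P : Matrix (Fin n) (Fin n) ℂ, Pᴴ = P →
      φ * φᴴ * P = P * (φ * φᴴ) → (φ⁻¹ * P * φ)ᴴ = φ⁻¹ * P * φ := by
    intro P hPh key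
    have hstep : φᴴ * P = φ⁻¹ * P * φ * φᴴ := by
      have : φ⁻¹ * (φ * φᴴ * P) = φ⁻¹ * (P * (φ * φᴴ)) := by rw [key]
      calc φᴴ * P = φ⁻¹ * (φ * φᴴ * P) := by
            rw [← Matrix.mul_assoc, ← Matrix.mul_assoc, h2, Matrix.one_mul]
        _ = φ⁻¹ * (P * (φ * φᴴ)) := by rw [key]
        _ = φ⁻¹ * P * φ * φᴴ := by simp only [Matrix.mul_assoc]
    calc (φ⁻¹ * P * φ)ᴴ = φᴴ * (Pᴴ * (φ⁻¹)ᴴ) := by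
          simp [Matrix.conjTranspose_mul, Matrix.mul_assoc]
      _ = φᴴ * P * (φᴴ)⁻¹ := by rw [hPh, Matrix.conjTranspose_nonsing_inv, Matrix.mul_assoc]
      _ = φ⁻¹ * P * φ * (φᴴ * (φᴴ)⁻¹) := by rw [hstep]; simp only [Matrix.mul_assoc]
      _ = φ⁻¹ * P * φ := by rw [h3, Matrix.mul_one]
  have idem : ∀ P : Matrix (Fin n) (Fin n) ℂ, P * P = P →
      (φ⁻¹ * P * φ) * (φ⁻¹ * P * φ) = φ⁻¹ * P * φ := by
    intro P hPP
    calc (φ⁻¹ * P * φ) * (φ⁻¹ * P * φ) = φ⁻¹ * P * (φ * φ⁻¹) * P * φ := by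
          simp only [Matrix.mul_assoc]
      _ = φ⁻¹ * (P * P) * φ := by rw [h1]; simp only [Matrix.mul_assoc, Matrix.mul_one]
      _ = φ⁻¹ * P * φ := by rw [hPP, Matrix.mul_assoc]
  subst hQ1 hQ2
  exact ⟨⟨idem P1 hP1, herm P1 hP1h key1⟩, ⟨idem P2 hP2, herm P2 hP2h key2⟩⟩
end

section
/- Let Π₁ be a rank-1 Hermitian projector on ℂ⁴ and Λ = diag(iσ₂, iσ₂). Then Π₁ and Λ Π₁* Λ⁻¹ are mutually orthogonal projectors: Π₁ · (Λ Π₁* Λ⁻¹) = 0 = (Λ Π₁* Λ⁻¹) · Π₁; consequently Π := Π₁ + Λ Π₁* Λ⁻¹ is a rank-2 Hermitian projector. -/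
open Matrix Complex
open Module

noncomputable def sigma2 : Matrix (Fin 2) (Fin 2) ℂ := !![0, -Complex.I; Complex.I, 0]

noncomputable def Lam : Matrix (Fin 4) (Fin 4) ℂ :=
  Matrix.reindex finSumFinEquiv finSumFinEquiv
    (Matrix.fromBlocks (Complex.I • sigma2) 0 0 (Complex.I • sigma2))

lemma Lam_eq : Lam = !![0,1,0,0; -1,0,0,0; 0,0,0,1; 0,0,-1,0] := by
  have hv : ((3:Fin 4) : ℕ) = 3 := rfl
  have h32 : ¬ ((3:Fin 4) : ℕ) < 2 := by rw [hv]; norm_num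
  ext i j
  fin_cases i <;> fin_cases j <;>
    simp [Lam, sigma2, Matrix.fromBlocks, finSumFinEquiv, Fin.addCases, Fin.castLT,
      Fin.subNat, Matrix.vecHead, Matrix.vecTail, Function.comp, Complex.ext_iff, h32, hv]

lemma Lam_mul_Lam : Lam * Lam = -1 := by
  rw [Lam_eq]
  ext i j
  fin_cases i <;> fin_cases j <;>
    simp [Matrix.mul_apply, Fin.sum_univ_four, Matrix.one_apply, Matrix.vecHead, Matrix.vecTail]

lemma Lam_transpose : Lamᵀ = -Lam := by
  rw [Lam_eq]; ext i j
  fin_cases i <;> fin_cases j <;> simp [Matrix.vecHead, Matrix.vecTail]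

lemma Lam_conjTranspose : Lamᴴ = -Lam := by
  rw [Lam_eq]; ext i j
  fin_cases i <;> fin_cases j <;> simp [Matrix.vecHead, Matrix.vecTail]

lemma Lam_inv : Lam⁻¹ = -Lam := by
  apply Matrix.inv_eq_right_inv
  rw [Matrix.mul_neg, Lam_mul_Lam, neg_neg]

lemma quad_zero (S : Matrix (Fin 4) (Fin 4) ℂ) (hS : Sᵀ = -S) (w : Fin 4 → ℂ) :
    ∑ k, ∑ l, w k * S k l * w l = 0 := by
  have h : ∑ k, ∑ l, w k * S k l * w l = -∑ k, ∑ l, w k * S k l * w l := by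
    nth_rewrite 1 [Finset.sum_comm]
    rw [← Finset.sum_neg_distrib]
    refine Finset.sum_congr rfl fun k _ => ?_
    rw [← Finset.sum_neg_distrib]
    refine Finset.sum_congr rfl fun l _ => ?_
    have hlk : S l k = -S k l := by
      have := congrFun (congrFun hS k) l
      simpa using this
    rw [hlk]; ring
  have h2 : (2:ℂ) * (∑ k, ∑ l, w k * S k l * w l) = 0 := by linear_combination h
  simpa using h2

lemma rank_one_decomp (A : Matrix (Fin 4) (Fin 4) ℂ) (h : A.rank = 1) :
    ∃ v w : Fin 4 → ℂ, ∀ i j, A i j = v i * w j := by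
  rw [Matrix.rank] at h
  obtain ⟨v, -, hv⟩ := finrank_eq_one_iff'.mp h
  have hcol : ∀ j, ∃ c : ℂ, ∀ i, c * (v : Fin 4 → ℂ) i = A i j := by
    intro j
    have hmem : (fun i => A i j) ∈ LinearMap.range A.mulVecLin := by
      refine ⟨Pi.single j 1, ?_⟩
      funext i
      simp [Matrix.mulVecLin_apply, Matrix.mulVec_single]
    obtain ⟨c, hc⟩ := hv ⟨_, hmem⟩
    exact ⟨c, fun i => congrFun (congrArg Subtype.val hc) i⟩
  choose w hw using hcol
  exact ⟨(v : Fin 4 → ℂ), w, fun i j => by rw [← hw j i]; ring⟩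

lemma sandwich_zero (S A : Matrix (Fin 4) (Fin 4) ℂ) (hS : Sᵀ = -S) (hA : A.rank = 1) :
    A * S * Aᵀ = 0 := by
  obtain ⟨v, w, hP⟩ := rank_one_decomp A hA
  ext i j
  have key : ∀ l k, A i k * S k l * A j l = v i * v j * (w k * S k l * w l) := by
    intro l k; rw [hP i k, hP j l]; ring
  simp only [Matrix.mul_apply, Matrix.transpose_apply, Finset.sum_mul, Matrix.zero_apply]
  simp only [key, ← Finset.mul_sum]
  rw [Finset.sum_comm, quad_zero S hS w, mul_zero]

theorem stmt_8 (P1 : Matrix (Fin 4) (Fin 4) ℂ)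
    (hproj : P1 * P1 = P1) (hherm : P1ᴴ = P1) (hrank : P1.rank = 1) :
    P1 * (Lam * P1.map (starRingEnd ℂ) * Lam⁻¹) = 0 ∧
    (Lam * P1.map (starRingEnd ℂ) * Lam⁻¹) * P1 = 0 ∧
    ((P1 + Lam * P1.map (starRingEnd ℂ) * Lam⁻¹) *
        (P1 + Lam * P1.map (starRingEnd ℂ) * Lam⁻¹)
      = P1 + Lam * P1.map (starRingEnd ℂ) * Lam⁻¹) ∧
    (P1 + Lam * P1.map (starRingEnd ℂ) * Lam⁻¹)ᴴ
      = P1 + Lam * P1.map (starRingEnd ℂ) * Lam⁻¹ ∧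
    (P1 + Lam * P1.map (starRingEnd ℂ) * Lam⁻¹).rank = 2 := by
  have hmap : P1.map (starRingEnd ℂ) = P1ᵀ := by
    ext i j
    simpa using congrFun (congrFun hherm j) i
  simp only [hmap]
  set Q : Matrix (Fin 4) (Fin 4) ℂ := Lam * P1ᵀ * Lam⁻¹ with hQdef
  have Key1 : P1 * Lam * P1ᵀ = 0 := sandwich_zero Lam P1 Lam_transpose hrank
  have Key2 : P1ᵀ * Lam * P1 = 0 := by
    have h := sandwich_zero Lam P1ᵀ Lam_transpose
      (by rw [Matrix.rank_transpose]; exact hrank)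
    rwa [Matrix.transpose_transpose] at h
  have h1 : P1 * Q = 0 := by
    rw [hQdef, ← Matrix.mul_assoc, ← Matrix.mul_assoc, Key1, Matrix.zero_mul]
  have h2 : Q * P1 = 0 := by
    rw [hQdef, Lam_inv]
    calc Lam * P1ᵀ * -Lam * P1 = -(Lam * (P1ᵀ * Lam * P1)) := by
          simp only [Matrix.mul_neg, Matrix.neg_mul, Matrix.mul_assoc]
      _ = 0 := by rw [Key2, Matrix.mul_zero, neg_zero]
  have hinvmul : Lam⁻¹ * Lam = 1 := by
    rw [Lam_inv, Matrix.neg_mul, Lam_mul_Lam, neg_neg]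
  have hPT : P1ᵀ * P1ᵀ = P1ᵀ := by rw [← Matrix.transpose_mul, hproj]
  have hQQ : Q * Q = Q := by
    rw [hQdef]
    simp only [Matrix.mul_assoc]
    rw [← Matrix.mul_assoc Lam⁻¹ Lam, hinvmul, Matrix.one_mul,
      ← Matrix.mul_assoc P1ᵀ P1ᵀ, hPT]
  have hidem : (P1 + Q) * (P1 + Q) = P1 + Q := by
    rw [Matrix.add_mul, Matrix.mul_add, Matrix.mul_add, hproj, h1, h2, hQQ, add_zero, zero_add]
  have hQH : Qᴴ = Q := by
    have hLinvH : (Lam⁻¹)ᴴ = Lam := by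
      rw [Lam_inv, Matrix.conjTranspose_neg, Lam_conjTranspose, neg_neg]
    have hPTH : (P1ᵀ)ᴴ = P1ᵀ := by
      ext i j
      simpa using congrFun (congrFun hherm j) i
    rw [hQdef, Matrix.conjTranspose_mul, Matrix.conjTranspose_mul, hLinvH, hPTH,
      Lam_conjTranspose, Lam_inv]
    simp only [Matrix.mul_neg, Matrix.neg_mul, Matrix.mul_assoc]
  have hherm2 : (P1 + Q)ᴴ = P1 + Q := by rw [Matrix.conjTranspose_add, hherm, hQH]
  have hudet : IsUnit Lam.det :=
    Matrix.isUnit_det_of_right_inverse (B := -Lam) (by rw [Matrix.mul_neg, Lam_mul_Lam, neg_neg])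
  have hudet' : IsUnit (Lam⁻¹).det := by
    rw [Lam_inv]
    exact Matrix.isUnit_det_of_right_inverse (B := Lam)
      (by rw [Matrix.neg_mul, Lam_mul_Lam, neg_neg])
  have hQrank : Q.rank = 1 := by
    rw [hQdef, Matrix.rank_mul_eq_left_of_isUnit_det Lam⁻¹ (Lam * P1ᵀ) hudet',
      Matrix.rank_mul_eq_right_of_isUnit_det Lam P1ᵀ hudet, Matrix.rank_transpose, hrank]
  -- rank of the sum
  have hSP : (P1 + Q) * P1 = P1 := by
    rw [Matrix.add_mul, hproj, h2, add_zero]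
  have hSQ : (P1 + Q) * Q = Q := by
    rw [Matrix.add_mul, h1, hQQ, zero_add]
  set p := LinearMap.range P1.mulVecLin with hp
  set q := LinearMap.range Q.mulVecLin with hq
  have hple : p ≤ LinearMap.range (P1 + Q).mulVecLin := by
    rintro x ⟨a, rfl⟩
    exact ⟨P1.mulVecLin a, by
      simp only [Matrix.mulVecLin_apply, Matrix.mulVec_mulVec, hSP]⟩
  have hqle : q ≤ LinearMap.range (P1 + Q).mulVecLin := by
    rintro x ⟨a, rfl⟩
    exact ⟨Q.mulVecLin a, by
      simp only [Matrix.mulVecLin_apply, Matrix.mulVec_mulVec, hSQ]⟩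
  have hrange : LinearMap.range (P1 + Q).mulVecLin = p ⊔ q := by
    refine le_antisymm ?_ (sup_le hple hqle)
    rintro x ⟨a, rfl⟩
    have : (P1 + Q).mulVecLin a = P1.mulVec a + Q.mulVec a := by
      simp [Matrix.mulVecLin_apply, Matrix.add_mulVec]
    rw [this]
    exact Submodule.add_mem_sup ⟨a, rfl⟩ ⟨a, rfl⟩
  have hinf : p ⊓ q = ⊥ := by
    rw [eq_bot_iff]
    rintro x hx
    obtain ⟨⟨a, ha⟩, ⟨b, hb⟩⟩ := Submodule.mem_inf.mp hx
    simp only [Matrix.mulVecLin_apply] at ha hb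
    have hx1 : P1.mulVec x = x := by
      rw [← ha, Matrix.mulVec_mulVec, hproj]
    have hx2 : P1.mulVec x = 0 := by
      rw [← hb, Matrix.mulVec_mulVec, h1, Matrix.zero_mulVec]
    simp only [Submodule.mem_bot]
    rw [← hx1, hx2]
  have hfin := Submodule.finrank_sup_add_finrank_inf_eq p q
  rw [hinf, finrank_bot] at hfin
  have hfp : finrank ℂ p = 1 := hrank
  have hfq : finrank ℂ q = 1 := hQrank
  have hrank2 : (P1 + Q).rank = 2 := by
    rw [Matrix.rank, hrange]
    omega
  exact ⟨h1, h2, hidem, hherm2, hrank2⟩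
end

section
/- Let Π be a rank-2 Hermitian projector on ℂ⁴ satisfying Π* = Λ Π Λ⁻¹ where Λ = diag(iσ₂, iσ₂). Then there exists a rank-1 Hermitian projector Π₁ such that Π = Π₁ + Λ Π₁* Λ⁻¹. -/
open Matrix Complex

noncomputable def Ee : Matrix (Fin 4) (Fin 4) ℂ := !![0,1,0,0;-1,0,0,0;0,0,0,1;0,0,-1,0]

lemma Lam_eq_s13 : Lam = Ee := by
  ext i j
  fin_cases i <;> fin_cases j <;>
    norm_num [Lam, sigma2, Ee, Matrix.fromBlocks, finSumFinEquiv, Matrix.reindex_apply,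
      Matrix.submatrix_apply, Fin.addCases, Matrix.vecHead, Matrix.vecTail,
      Fin.castLT, Fin.subNat, Complex.ext_iff]

lemma Ee_mul_Ee : Ee * Ee = -1 := by
  ext i j
  fin_cases i <;> fin_cases j <;>
    norm_num [Ee, Matrix.mul_apply, Fin.sum_univ_four, Matrix.one_apply,
      Matrix.vecHead, Matrix.vecTail, Fin.ext_iff, Matrix.cons_val_two, Matrix.cons_val_three]

lemma Ee_inv : Ee⁻¹ = -Ee := by
  apply Matrix.inv_eq_right_inv
  rw [Matrix.mul_neg, Ee_mul_Ee]; simp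

lemma vmv_mul_vmv (a b c d : Fin 4 → ℂ) :
    vecMulVec a b * vecMulVec c d = (b ⬝ᵥ c) • vecMulVec a d := by
  ext i j
  simp only [Matrix.mul_apply, vecMulVec_apply, Matrix.smul_apply, dotProduct,
    smul_eq_mul, Finset.sum_mul]
  exact Finset.sum_congr rfl fun k _ => by ring

lemma mul_vmv (M : Matrix (Fin 4) (Fin 4) ℂ) (a b : Fin 4 → ℂ) :
    M * vecMulVec a b = vecMulVec (M *ᵥ a) b := by
  ext i j
  simp only [Matrix.mul_apply, vecMulVec_apply, mulVec, dotProduct, Finset.sum_mul]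
  exact Finset.sum_congr rfl fun k _ => by ring

lemma vmv_mul (a b : Fin 4 → ℂ) (M : Matrix (Fin 4) (Fin 4) ℂ) :
    vecMulVec a b * M = vecMulVec a (b ᵥ* M) := by
  ext i j
  simp only [Matrix.mul_apply, vecMulVec_apply, vecMul, dotProduct, Finset.mul_sum]
  exact Finset.sum_congr rfl fun k _ => by ring

lemma trace_vmv (a b : Fin 4 → ℂ) : (vecMulVec a b).trace = a ⬝ᵥ b := by
  simp [Matrix.trace, vecMulVec_apply, dotProduct, Matrix.diag]

lemma vmv_herm (a : Fin 4 → ℂ) : (vecMulVec a (star a))ᴴ = vecMulVec a (star a) := by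
  ext i j
  simp [Matrix.conjTranspose_apply, vecMulVec_apply, mul_comm]

lemma trace_eq_rank_aux {n : ℕ} (A : Matrix (Fin n) (Fin n) ℂ) (h : A * A = A) :
    A.trace = (A.rank : ℂ) := by
  have hproj : LinearMap.IsProj (LinearMap.range A.mulVecLin) A.mulVecLin := by
    constructor
    · intro x; exact LinearMap.mem_range_self _ x
    · rintro x ⟨y, rfl⟩
      simp only [Matrix.mulVecLin_apply, Matrix.mulVec_mulVec, h]
  have ht := hproj.trace
  have h2 : LinearMap.toMatrix' A.mulVecLin = A := by
    rw [← Matrix.toLin'_apply', LinearMap.toMatrix'_toLin']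
  rw [Matrix.rank, ← ht, LinearMap.trace_eq_matrix_trace ℂ (Pi.basisFun ℂ (Fin n)),
    LinearMap.toMatrix_eq_toMatrix', h2]

lemma eq_zero_of_trace_aux {n : ℕ} (R : Matrix (Fin n) (Fin n) ℂ)
    (h : R = R * Rᴴ) (ht : R.trace = 0) : R = 0 := by
  have key : ∑ i, ∑ j, Complex.normSq (R i j) = 0 := by
    have h1 : R.trace = ((∑ i, ∑ j, Complex.normSq (R i j) : ℝ) : ℂ) := by
      conv_lhs => rw [h]
      simp only [Matrix.trace, Matrix.diag, Matrix.mul_apply, Matrix.conjTranspose_apply]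
      push_cast
      refine Finset.sum_congr rfl fun i _ => Finset.sum_congr rfl fun j _ => ?_
      rw [← Complex.mul_conj]
      rfl
    rw [h1] at ht
    exact_mod_cast ht
  ext i j
  have h2 : ∀ i ∈ Finset.univ, ∑ j, Complex.normSq (R i j) = 0 := by
    intro i _
    have := (Finset.sum_eq_zero_iff_of_nonneg (fun i _ =>
      Finset.sum_nonneg (fun j _ => Complex.normSq_nonneg _))).mp key
    exact this i (Finset.mem_univ i)
  have h3 := (Finset.sum_eq_zero_iff_of_nonneg (fun j _ =>
      Complex.normSq_nonneg _)).mp (h2 i (Finset.mem_univ i)) j (Finset.mem_univ j)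
  simpa using Complex.normSq_eq_zero.mp h3

theorem stmt_13 (P : Matrix (Fin 4) (Fin 4) ℂ)
    (hproj : P * P = P) (hherm : Pᴴ = P) (hrank : P.rank = 2)
    (hsym : P.map (starRingEnd ℂ) = Lam * P * Lam⁻¹) :
    ∃ P1 : Matrix (Fin 4) (Fin 4) ℂ,
      P1 * P1 = P1 ∧ P1ᴴ = P1 ∧ P1.rank = 1 ∧
      P = P1 + Lam * P1.map (starRingEnd ℂ) * Lam⁻¹ := by
  have hLamInv : Lam⁻¹ = -Ee := by rw [Lam_eq_s13, Ee_inv]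
  -- find a unit vector u in the range of P
  have hP0 : P ≠ 0 := by
    intro h0
    rw [h0, Matrix.rank_zero] at hrank
    norm_num at hrank
  obtain ⟨v, hv⟩ : ∃ v : Fin 4 → ℂ, P *ᵥ v ≠ 0 := by
    by_contra hc
    push_neg at hc
    apply hP0
    ext i j
    have h1 := congrFun (hc (Pi.single j 1)) i
    simpa [Matrix.mulVec_single] using h1
  set w0 : Fin 4 → ℂ := P *ᵥ v with hw0
  have hPw0 : P *ᵥ w0 = w0 := by rw [hw0, Matrix.mulVec_mulVec, hproj]
  set r : ℝ := ∑ i, Complex.normSq (w0 i) with hrdef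
  have hrpos : 0 < r := by
    have hex : ∃ i, w0 i ≠ 0 := by
      by_contra hno; push_neg at hno; exact hv (funext hno)
    obtain ⟨i0, hi0⟩ := hex
    refine Finset.sum_pos' (fun i _ => Complex.normSq_nonneg _) ⟨i0, Finset.mem_univ _, ?_⟩
    exact Complex.normSq_pos.mpr hi0
  set s : ℝ := (Real.sqrt r)⁻¹ with hsdef
  set u : Fin 4 → ℂ := (s : ℂ) • w0 with hudef
  have hw0dot : star w0 ⬝ᵥ w0 = (r : ℝ) := by
    rw [hrdef]; push_cast
    refine Finset.sum_congr rfl fun i _ => ?_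
    rw [Complex.normSq_eq_conj_mul_self]
    rfl
  have hu1 : star u ⬝ᵥ u = 1 := by
    have hreal : s * (s * r) = 1 := by
      rw [hsdef]
      rw [show r = Real.sqrt r * Real.sqrt r from (Real.mul_self_sqrt hrpos.le).symm]
      have h₁ : Real.sqrt r ≠ 0 := ne_of_gt (Real.sqrt_pos.mpr hrpos)
      field_simp
      rw [Real.sqrt_sq (Real.sqrt_nonneg _)]
    have hss : (s : ℂ) * ((s : ℂ) * (r : ℂ)) = 1 := by
      calc (s:ℂ) * ((s:ℂ) * (r:ℂ)) = ((s * (s * r) : ℝ) : ℂ) := by push_cast; ring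
        _ = 1 := by rw [hreal]; norm_num
    rw [hudef, star_smul, smul_dotProduct, dotProduct_smul, hw0dot]
    simpa [Complex.star_def, Complex.conj_ofReal, smul_eq_mul] using hss
  have hu2 : P *ᵥ u = u := by
    rw [hudef, Matrix.mulVec_smul, hPw0]
  clear_value u
  clear hw0dot hPw0 hv hw0 hrdef hsdef hudef hrpos
  -- the partner vector
  set wv : Fin 4 → ℂ := Ee *ᵥ (star u) with hwv
  have h_uw : star u ⬝ᵥ wv = 0 := by
    simp only [hwv, Ee, Matrix.mulVec, dotProduct, Fin.sum_univ_four, Pi.star_apply]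
    norm_num [Matrix.vecHead, Matrix.vecTail, Matrix.cons_val_two, Matrix.cons_val_three]
    ring
  have h_wu : star wv ⬝ᵥ u = 0 := by
    simp only [hwv, Ee, Matrix.mulVec, dotProduct, Fin.sum_univ_four, Pi.star_apply]
    norm_num [Matrix.vecHead, Matrix.vecTail, Matrix.cons_val_two, Matrix.cons_val_three]
    ring
  have h_ww : star wv ⬝ᵥ wv = 1 := by
    have h := hu1
    simp only [dotProduct, Fin.sum_univ_four, Pi.star_apply, Complex.star_def] at h
    simp only [hwv, Ee, Matrix.mulVec, dotProduct, Fin.sum_univ_four, Pi.star_apply,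
      Complex.star_def]
    norm_num [Matrix.vecHead, Matrix.vecTail, Matrix.cons_val_two, Matrix.cons_val_three]
    linear_combination h
  have hxP : star u ᵥ* P = star u := by
    have h := congrArg star hu2
    rwa [Matrix.star_mulVec, hherm] at h
  have hmap : P.map (starRingEnd ℂ) = Pᵀ := by
    ext i j
    simp only [Matrix.map_apply, Matrix.transpose_apply]
    have h := congrFun (congrFun hherm i) j
    simp only [Matrix.conjTranspose_apply] at h
    calc (starRingEnd ℂ) (P i j) = star (P i j) := rfl
      _ = star (star (P j i)) := by rw [h]
      _ = P j i := star_star _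
  have hsymE : Pᵀ = Ee * P * (-Ee) := by rw [← hmap, hsym, Lam_eq_s13, Ee_inv]
  have hPwv : P *ᵥ wv = wv := by
    have h1 : (Ee * P * (-Ee)) *ᵥ star u = star u := by
      rw [← hsymE, Matrix.mulVec_transpose]; exact hxP
    have e1 : (Ee * P * Ee) *ᵥ star u = -star u := by
      have h2 : -((Ee * P * Ee) *ᵥ star u) = star u := by
        rw [← Matrix.neg_mulVec, ← Matrix.mul_neg]; exact h1
      exact neg_eq_iff_eq_neg.mp h2
    have e2 : (Ee * (Ee * P * Ee)) *ᵥ star u = -wv := by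
      rw [← Matrix.mulVec_mulVec, e1, Matrix.mulVec_neg, hwv]
    have e3 : Ee * (Ee * P * Ee) = -(P * Ee) := by
      have h4 : Ee * (Ee * P * Ee) = (Ee * Ee) * (P * Ee) := by noncomm_ring
      rw [h4, Ee_mul_Ee]; simp
    rw [e3, Matrix.neg_mulVec] at e2
    have e4 : (P * Ee) *ᵥ star u = wv := neg_injective e2
    rw [← Matrix.mulVec_mulVec, ← hwv] at e4
    exact e4
  have hwvP : star wv ᵥ* P = star wv := by
    have h := congrArg star hPwv
    rwa [Matrix.star_mulVec, hherm] at h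
  -- the two rank-one pieces
  have hP1idem : vecMulVec u (star u) * vecMulVec u (star u) = vecMulVec u (star u) := by
    rw [vmv_mul_vmv, hu1, one_smul]
  have hW2idem : vecMulVec wv (star wv) * vecMulVec wv (star wv) = vecMulVec wv (star wv) := by
    rw [vmv_mul_vmv, h_ww, one_smul]
  have hP1W2 : vecMulVec u (star u) * vecMulVec wv (star wv) = 0 := by
    rw [vmv_mul_vmv, h_uw, zero_smul]
  have hW2P1 : vecMulVec wv (star wv) * vecMulVec u (star u) = 0 := by
    rw [vmv_mul_vmv, h_wu, zero_smul]
  have hconj : (vecMulVec u (star u)).map (starRingEnd ℂ) = vecMulVec (star u) u := by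
    ext i j
    simp [Matrix.map_apply, vecMulVec_apply, _root_.map_mul, Pi.star_apply, Complex.star_def, mul_comm]
  have hW2form : Lam * (vecMulVec u (star u)).map (starRingEnd ℂ) * Lam⁻¹
      = vecMulVec wv (star wv) := by
    have hvecrel : u ᵥ* (-Ee) = star wv := by
      funext j
      fin_cases j <;>
        · simp only [hwv, Ee, Matrix.vecMul, Matrix.mulVec, dotProduct, Fin.sum_univ_four,
            Pi.star_apply, Matrix.neg_apply, Complex.star_def, map_add, map_neg, _root_.map_mul,
            Complex.conj_conj]
          norm_num [Matrix.vecHead, Matrix.vecTail, Matrix.cons_val_two, Matrix.cons_val_three]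
          try ring
    rw [hconj, Lam_eq_s13, Ee_inv, mul_vmv, vmv_mul, hvecrel, ← hwv]
  have hQQ : (vecMulVec u (star u) + vecMulVec wv (star wv)) *
      (vecMulVec u (star u) + vecMulVec wv (star wv))
      = vecMulVec u (star u) + vecMulVec wv (star wv) := by
    rw [add_mul, mul_add, mul_add, hP1idem, hW2idem, hP1W2, hW2P1]
    simp
  have hPQ : P * (vecMulVec u (star u) + vecMulVec wv (star wv))
      = vecMulVec u (star u) + vecMulVec wv (star wv) := by
    rw [mul_add, mul_vmv, mul_vmv, hu2, hPwv]
  have hQP : (vecMulVec u (star u) + vecMulVec wv (star wv)) * P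
      = vecMulVec u (star u) + vecMulVec wv (star wv) := by
    rw [add_mul, vmv_mul, vmv_mul, hxP, hwvP]
  have hQherm : (vecMulVec u (star u) + vecMulVec wv (star wv))ᴴ
      = vecMulVec u (star u) + vecMulVec wv (star wv) := by
    rw [Matrix.conjTranspose_add, vmv_herm, vmv_herm]
  have htrQ : (vecMulVec u (star u) + vecMulVec wv (star wv)).trace = 2 := by
    rw [Matrix.trace_add, trace_vmv, trace_vmv, dotProduct_comm u,
      dotProduct_comm wv, hu1, h_ww]
    norm_num
  have htrP : P.trace = 2 := by
    rw [trace_eq_rank_aux P hproj, hrank]; norm_num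
  set Rm := P - (vecMulVec u (star u) + vecMulVec wv (star wv)) with hRm
  have hRm2 : Rm * Rm = Rm := by
    rw [hRm, Matrix.sub_mul, Matrix.mul_sub, Matrix.mul_sub, hproj, hPQ, hQP, hQQ]
    abel
  have hRmH : Rmᴴ = Rm := by rw [hRm, Matrix.conjTranspose_sub, hherm, hQherm]
  have hRmfact : Rm = Rm * Rmᴴ := by rw [hRmH]; exact hRm2.symm
  have htrRm : Rm.trace = 0 := by rw [hRm, Matrix.trace_sub, htrP, htrQ]; ring
  have hRm0 : Rm = 0 := eq_zero_of_trace_aux Rm hRmfact htrRm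
  have hPeq : P = vecMulVec u (star u) + vecMulVec wv (star wv) :=
    sub_eq_zero.mp (hRm.symm.trans hRm0)
  have htrP1 : (vecMulVec u (star u)).trace = 1 := by
    rw [trace_vmv, dotProduct_comm, hu1]
  have hrank1 : (vecMulVec u (star u)).rank = 1 := by
    have h := trace_eq_rank_aux _ hP1idem
    rw [htrP1] at h
    exact_mod_cast h.symm
  exact ⟨vecMulVec u (star u), hP1idem, vmv_herm u, hrank1, by rw [hW2form]; exact hPeq⟩
end

section
/- Let k₁ ∈ ℂ with Im k₁ > 0, p ∈ ℂ² a unit vector, and define ā(k) = (k₁*/k₁)·((k+k₁)/(k+k₁*))·[I₂ + (k²(k₁² - (k₁*)²)/((k₁*)²(k² - k₁²))) p* pᵀ]. Then det ā(k) = ((k - k₁*)(k + k₁))/((k + k₁*)(k - k₁)) for all k outside the pole set {±k₁, -k₁*}. -/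
open Matrix Complex

theorem stmt_16 (k₁ : ℂ) (hk₁ : 0 < k₁.im) (p : Fin 2 → ℂ)
    (hp : star p ⬝ᵥ p = 1)
    (k : ℂ) (h1 : k ≠ k₁) (h2 : k ≠ -k₁) (h3 : k ≠ -(star k₁)) :
    (((star k₁ / k₁) * ((k + k₁) / (k + star k₁))) •
        ((1 : Matrix (Fin 2) (Fin 2) ℂ)
          + (k ^ 2 * (k₁ ^ 2 - (star k₁) ^ 2)
              / ((star k₁) ^ 2 * (k ^ 2 - k₁ ^ 2))) •
            Matrix.vecMulVec (star p) p)).det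
      = ((k - star k₁) * (k + k₁)) / ((k + star k₁) * (k - k₁)) := by
  have hk₁0 : k₁ ≠ 0 := by
    intro h; rw [h] at hk₁; simp at hk₁
  have hsk₁0 : (star k₁ : ℂ) ≠ 0 := by
    simpa using star_ne_zero.mpr hk₁0
  have hA : k - k₁ ≠ 0 := sub_ne_zero.mpr h1
  have hB : k + k₁ ≠ 0 := by
    intro h; exact h2 (eq_neg_of_add_eq_zero_left h)
  have hC : k + star k₁ ≠ 0 := by
    intro h; exact h3 (eq_neg_of_add_eq_zero_left h)
  have hD : k ^ 2 - k₁ ^ 2 ≠ 0 := by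
    have : k ^ 2 - k₁ ^ 2 = (k - k₁) * (k + k₁) := by ring
    rw [this]; exact mul_ne_zero hA hB
  have hp' : starRingEnd ℂ (p 0) * p 0 + starRingEnd ℂ (p 1) * p 1 = 1 := by
    simpa [dotProduct, Fin.sum_univ_two, Complex.star_def] using hp
  simp only [Complex.star_def] at hsk₁0 hC hp' ⊢
  set d : ℂ := k ^ 2 * (k₁ ^ 2 - (starRingEnd ℂ k₁) ^ 2) / ((starRingEnd ℂ k₁) ^ 2 * (k ^ 2 - k₁ ^ 2)) with hd
  have hdet1 : ((1 : Matrix (Fin 2) (Fin 2) ℂ) + d • Matrix.vecMulVec (star p) p).det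
      = 1 + d := by
    rw [Matrix.det_fin_two]
    simp only [Matrix.add_apply, Matrix.one_apply, Matrix.smul_apply,
      Matrix.vecMulVec_apply, smul_eq_mul, Pi.star_apply, Complex.star_def]
    norm_num
    linear_combination d * hp'
  rw [Matrix.det_smul, hdet1, hd]
  have h1d : (1 : ℂ) + k ^ 2 * (k₁ ^ 2 - (starRingEnd ℂ k₁) ^ 2) / ((starRingEnd ℂ k₁) ^ 2 * (k ^ 2 - k₁ ^ 2))
      = k₁ ^ 2 * (k - starRingEnd ℂ k₁) * (k + starRingEnd ℂ k₁) / ((starRingEnd ℂ k₁) ^ 2 * (k ^ 2 - k₁ ^ 2)) := by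
    field_simp
    ring
  rw [h1d]
  simp only [Fintype.card_fin, smul_eq_mul]
  field_simp
  ring
end
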